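/- arXiv:math/0010050 — 4 statements merged into one kernel-verified Lean document; each statement's English description precedes it below -/
import Mathlib

section
/- For every real λ ≠ 0 one has the identity X_a(λ)·X_a(−λ)·A(λ) + Y_a(λ)·Y_a(−λ)·B(λ) = −(1/(ħ²λ))·(1 + sinh(ħλ)/sinh(λ/(2η))). (This is the coefficient identity underlying the commutator [a(λ), a(μ)] = −(1/(ħ²λ))(1 + sinh(ħλ)/sinh(λ/(2η)))·δ(λ+μ) for a(λ) = X_a(λ)α(λ) + Y_a(λ)β(λ).) -/
/-!
`X_a` and `Y_a` are odd, so the left side is `-λ/(ħλ)² · ((u + 2c)² + u(1 - t h) - 4c²) / D(λ)`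
with `s = csch(λ/2η)`, `t = csch(λ/2η')`, `h = sinh ħλ`, `c = cosh(ħλ/2)` and `u = 1 + s h`.
Since `D(λ) = u + 4c + 1 - t h`, the numerator factors as `u · D(λ)`, and `D(λ)` cancels:
it is positive because `η' < η` and `csch` is antitone on each half-line, so `(s - t) h ≥ 0`.
-/

open Real

theorem inv_sinh_div_sub_inv_sinh_div_mul_sinh_nonneg {a b m : ℝ} (hb : 0 < b) (hba : b ≤ a)
    (hm : 0 ≤ m) (l : ℝ) :
    0 ≤ ((sinh (l / a))⁻¹ - (sinh (l / b))⁻¹) * sinh (m * l) := by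
  have of_pos : ∀ l : ℝ, 0 < l → 0 ≤ ((sinh (l / a))⁻¹ - (sinh (l / b))⁻¹) * sinh (m * l) := by
    intro l hl
    have hsinh_pos : 0 < sinh (l / a) := sinh_pos_iff.2 (div_pos hl (hb.trans_le hba))
    have hsinh_le : sinh (l / a) ≤ sinh (l / b) :=
      sinh_le_sinh.2 (div_le_div_of_nonneg_left hl.le hb hba)
    exact mul_nonneg (sub_nonneg.2 (inv_anti₀ hsinh_pos hsinh_le))
      (sinh_nonneg_iff.2 (by positivity))
  rcases lt_trichotomy l 0 with hl | rfl | hl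
  · convert of_pos (-l) (neg_pos.2 hl) using 1
    simp only [neg_div, mul_neg, sinh_neg, inv_neg]
    ring
  · simp
  · exact of_pos l hl

theorem stmt_5_general (ℏ η η' : ℝ) (hℏ : 0 < ℏ) (hη : 0 < η) (hη' : 0 < η')
    (hrel : 1 / η' = 1 / η + ℏ)
    (D A B Xa Ya : ℝ → ℝ)
    (hD : ∀ l : ℝ, D l =
      4 * Real.cosh (ℏ * l / 2) +
        ((Real.sinh (l / (2 * η)))⁻¹ - (Real.sinh (l / (2 * η')))⁻¹) * Real.sinh (ℏ * l) + 2)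
    (hA : ∀ l : ℝ, A l = l / D l)
    (hB : ∀ l : ℝ, B l =
      l * ((1 + (Real.sinh (l / (2 * η)))⁻¹ * Real.sinh (ℏ * l)) *
            (1 - (Real.sinh (l / (2 * η')))⁻¹ * Real.sinh (ℏ * l)) -
            4 * (Real.cosh (ℏ * l / 2)) ^ 2) / D l)
    (hXa : ∀ l : ℝ, Xa l =
      (1 / (ℏ * l)) * ((Real.sinh (l / (2 * η)))⁻¹ * Real.sinh (ℏ * l) + 2 * Real.cosh (ℏ * l / 2) + 1))
    (hYa : ∀ l : ℝ, Ya l = 1 / (ℏ * l)) :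
    ∀ l : ℝ, l ≠ 0 →
      Xa l * Xa (-l) * A l + Ya l * Ya (-l) * B l =
        -(1 / (ℏ ^ 2 * l)) * (1 + Real.sinh (ℏ * l) / Real.sinh (l / (2 * η))) := by
  intro l hl
  have hXa_neg : Xa (-l) = -Xa l := by
    simp only [hXa, mul_neg, neg_div, sinh_neg, cosh_neg, inv_neg]
    ring
  have hYa_neg : Ya (-l) = -Ya l := by simp only [hYa, mul_neg, div_neg]
  have hη'_le : η' ≤ η := (one_div_le_one_div hη hη').1 (by rw [hrel]; linarith)
  have hD_pos : 0 < D l := by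
    rw [hD]
    linarith [cosh_pos (ℏ * l / 2), inv_sinh_div_sub_inv_sinh_div_mul_sinh_nonneg
      (by positivity : 0 < 2 * η') (by linarith : 2 * η' ≤ 2 * η) hℏ.le l]
  rw [hXa_neg, hYa_neg, hA, hB, hXa, hYa, div_eq_mul_inv (sinh (ℏ * l))]
  set s := (sinh (l / (2 * η)))⁻¹
  set t := (sinh (l / (2 * η')))⁻¹
  set h := sinh (ℏ * l)
  set c := cosh (ℏ * l / 2)
  have hnum_factor :
      (s * h + 2 * c + 1) ^ 2 + (1 + s * h) * (1 - t * h) - 4 * c ^ 2 = (1 + s * h) * D l := by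
    rw [hD]; ring
  clear_value s t h c
  calc _ = -(1 / (ℏ * l)) ^ 2 * l *
        ((s * h + 2 * c + 1) ^ 2 + (1 + s * h) * (1 - t * h) - 4 * c ^ 2) / D l := by ring
    _ = -(1 / (ℏ * l)) ^ 2 * l * (1 + s * h) := by
      rw [hnum_factor, ← mul_assoc, mul_div_cancel_right₀ _ hD_pos.ne']
    _ = _ := by
      field_simp

/-- for every real λ ≠ 0,
`X_a(λ)·X_a(−λ)·A(λ) + Y_a(λ)·Y_a(−λ)·B(λ) = −(1/(ħ²λ))·(1 + sinh(ħλ)/sinh(λ/(2η)))`. -/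
theorem stmt_5 (ℏ η η' : ℝ) (hℏ : 0 < ℏ) (hη : 0 < η) (hη' : 0 < η')
    (hrel : 1 / η' = 1 / η + ℏ)
    (D A B Xa Xb Ya Yb : ℝ → ℝ)
    (hD : ∀ l : ℝ, D l =
      4 * Real.cosh (ℏ * l / 2) +
        ((Real.sinh (l / (2 * η)))⁻¹ - (Real.sinh (l / (2 * η')))⁻¹) * Real.sinh (ℏ * l) + 2)
    (hA : ∀ l : ℝ, A l = l / D l)
    (hB : ∀ l : ℝ, B l =
      l * ((1 + (Real.sinh (l / (2 * η)))⁻¹ * Real.sinh (ℏ * l)) *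
            (1 - (Real.sinh (l / (2 * η')))⁻¹ * Real.sinh (ℏ * l)) -
            4 * (Real.cosh (ℏ * l / 2)) ^ 2) / D l)
    (hXa : ∀ l : ℝ, Xa l =
      (1 / (ℏ * l)) * ((Real.sinh (l / (2 * η)))⁻¹ * Real.sinh (ℏ * l) + 2 * Real.cosh (ℏ * l / 2) + 1))
    (hXb : ∀ l : ℝ, Xb l =
      (1 / (ℏ * l)) * ((Real.sinh (l / (2 * η')))⁻¹ * Real.sinh (ℏ * l) - 2 * Real.cosh (ℏ * l / 2) - 1))
    (hYa : ∀ l : ℝ, Ya l = 1 / (ℏ * l))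
    (hYb : ∀ l : ℝ, Yb l = 1 / (ℏ * l)) :
    ∀ l : ℝ, l ≠ 0 →
      Xa l * Xa (-l) * A l + Ya l * Ya (-l) * B l =
        -(1 / (ℏ ^ 2 * l)) * (1 + Real.sinh (ℏ * l) / Real.sinh (l / (2 * η))) :=
  stmt_5_general ℏ η η' hℏ hη hη' hrel D A B Xa Ya hD hA hB hXa hYa
end

section
/- For every real λ ≠ 0 one has the identity X_b(λ)·X_b(−λ)·A(λ) + Y_b(λ)·Y_b(−λ)·B(λ) = −(1/(ħ²λ))·(1 − sinh(ħλ)/sinh(λ/(2η′))). (This is the coefficient identity underlying the commutator [b(λ), b(μ)] = −(1/(ħ²λ))(1 − sinh(ħλ)/sinh(λ/(2η′)))·δ(λ+μ) for b(λ) = X_b(λ)α(λ) + Y_b(λ)β(λ).) -/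
/-!
Write `u = sinh(ħλ)/sinh(λ/(2η))`, `v = sinh(ħλ)/sinh(λ/(2η′))`, `c = cosh(ħλ/2)`, so that
`D = 4c + u - v + 2`. Since `X_b` and `Y_b` are odd, the left side is
`-(1/(ħ²λ)) · ((v - 2c - 1)² + (1 + u)(1 - v) - 4c²) / D`, and the numerator factors as
`(1 - v) · D`. It remains to see `D ≠ 0`: as `λ/(2η′) = λ/(2η) + ħλ/2` with both summands of the
sign of `λ`, and `csch` decreases on each half-line, `csch(λ/(2η)) - csch(λ/(2η′))` has the sign
of `λ`, as does `sinh(ħλ)`; hence `u - v > 0` and `D > 0`.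
-/

namespace Real

theorem inv_sinh_sub_inv_sinh_add_mul_sinh_two_mul_pos {a t : ℝ} (hat : 0 < a * t) :
    0 < ((sinh a)⁻¹ - (sinh (a + t))⁻¹) * sinh (2 * t) := by
  wlog ha : 0 < a generalizing a t
  · have ha_neg : a < 0 := lt_of_le_of_ne (not_lt.1 ha) (left_ne_zero_of_mul hat.ne')
    convert this (a := -a) (t := -t) (by linarith) (by linarith) using 1
    rw [← neg_add, mul_neg, sinh_neg, sinh_neg, sinh_neg, inv_neg, inv_neg]
    ring
  have ht : 0 < t := pos_of_mul_pos_right hat ha.le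
  have hsinh_a : 0 < sinh a := sinh_pos_iff.2 ha
  have hsinh_lt : sinh a < sinh (a + t) := sinh_lt_sinh.2 (by linarith)
  have hinv_lt : (sinh (a + t))⁻¹ < (sinh a)⁻¹ :=
    (inv_lt_inv₀ (hsinh_a.trans hsinh_lt) hsinh_a).2 hsinh_lt
  exact mul_pos (sub_pos.2 hinv_lt) (sinh_pos_iff.2 (by linarith))

end Real

theorem commutator_coeff_rational_identity {h l u v c d : ℝ} (hh : h ≠ 0) (hl : l ≠ 0)
    (hd : d ≠ 0) (hd_def : d = 4 * c + (u - v) + 2) :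
    (1 / (h * l) * (v - 2 * c - 1)) * (1 / -(h * l) * (v - 2 * c - 1)) * (l / d) +
        (1 / (h * l)) * (1 / -(h * l)) * (l * ((1 + u) * (1 - v) - 4 * c ^ 2) / d) =
      -(1 / (h ^ 2 * l) * (1 - v)) := by
  field_simp
  subst hd_def
  ring

theorem stmt_6_general (ℏ η η' : ℝ) (hℏ : 0 < ℏ) (hη : 0 < η)
    (hrel : 1 / η' = 1 / η + ℏ)
    (D A B Xb Yb : ℝ → ℝ)
    (hD : ∀ l : ℝ, D l =
      4 * Real.cosh (ℏ * l / 2) +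
        ((Real.sinh (l / (2 * η)))⁻¹ - (Real.sinh (l / (2 * η')))⁻¹) * Real.sinh (ℏ * l) + 2)
    (hA : ∀ l : ℝ, A l = l / D l)
    (hB : ∀ l : ℝ, B l =
      l * ((1 + (Real.sinh (l / (2 * η)))⁻¹ * Real.sinh (ℏ * l)) *
            (1 - (Real.sinh (l / (2 * η')))⁻¹ * Real.sinh (ℏ * l)) -
            4 * (Real.cosh (ℏ * l / 2)) ^ 2) / D l)
    (hXb : ∀ l : ℝ, Xb l =
      (1 / (ℏ * l)) * ((Real.sinh (l / (2 * η')))⁻¹ * Real.sinh (ℏ * l) - 2 * Real.cosh (ℏ * l / 2) - 1))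
    (hYb : ∀ l : ℝ, Yb l = 1 / (ℏ * l)) :
    ∀ l : ℝ, l ≠ 0 →
      Xb l * Xb (-l) * A l + Yb l * Yb (-l) * B l =
        -(1 / (ℏ ^ 2 * l)) * (1 - Real.sinh (ℏ * l) / Real.sinh (l / (2 * η'))) := by
  intro l hl
  have hsum : l / (2 * η') = l / (2 * η) + ℏ * l / 2 := by
    linear_combination (l / 2) * hrel
  have hsign : 0 < l / (2 * η) * (ℏ * l / 2) := by
    have : 0 < l ^ 2 * ℏ / (4 * η) := by positivity
    convert this using 1
    ring
  have hDpos : 0 < D l := by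
    have hcsch := Real.inv_sinh_sub_inv_sinh_add_mul_sinh_two_mul_pos hsign
    rw [← hsum, mul_div_cancel₀ _ two_ne_zero] at hcsch
    rw [hD]
    linarith [Real.one_le_cosh (ℏ * l / 2)]
  rw [hA, hB, hXb, hXb, hYb, hYb, div_eq_inv_mul (Real.sinh (ℏ * l))]
  simp only [mul_neg, neg_div, Real.sinh_neg, Real.cosh_neg, inv_neg, neg_mul, neg_neg]
  refine commutator_coeff_rational_identity hℏ.ne' hl hDpos.ne' ?_
  rw [hD]
  ring

/-- for every real λ ≠ 0,
`X_b(λ)·X_b(−λ)·A(λ) + Y_b(λ)·Y_b(−λ)·B(λ) = −(1/(ħ²λ))·(1 − sinh(ħλ)/sinh(λ/(2η′)))`. -/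
theorem stmt_6 (ℏ η η' : ℝ) (hℏ : 0 < ℏ) (hη : 0 < η) (hη' : 0 < η')
    (hrel : 1 / η' = 1 / η + ℏ)
    (D A B Xa Xb Ya Yb : ℝ → ℝ)
    (hD : ∀ l : ℝ, D l =
      4 * Real.cosh (ℏ * l / 2) +
        ((Real.sinh (l / (2 * η)))⁻¹ - (Real.sinh (l / (2 * η')))⁻¹) * Real.sinh (ℏ * l) + 2)
    (hA : ∀ l : ℝ, A l = l / D l)
    (hB : ∀ l : ℝ, B l =
      l * ((1 + (Real.sinh (l / (2 * η)))⁻¹ * Real.sinh (ℏ * l)) *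
            (1 - (Real.sinh (l / (2 * η')))⁻¹ * Real.sinh (ℏ * l)) -
            4 * (Real.cosh (ℏ * l / 2)) ^ 2) / D l)
    (hXa : ∀ l : ℝ, Xa l =
      (1 / (ℏ * l)) * ((Real.sinh (l / (2 * η)))⁻¹ * Real.sinh (ℏ * l) + 2 * Real.cosh (ℏ * l / 2) + 1))
    (hXb : ∀ l : ℝ, Xb l =
      (1 / (ℏ * l)) * ((Real.sinh (l / (2 * η')))⁻¹ * Real.sinh (ℏ * l) - 2 * Real.cosh (ℏ * l / 2) - 1))
    (hYa : ∀ l : ℝ, Ya l = 1 / (ℏ * l))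
    (hYb : ∀ l : ℝ, Yb l = 1 / (ℏ * l)) :
    ∀ l : ℝ, l ≠ 0 →
      Xb l * Xb (-l) * A l + Yb l * Yb (-l) * B l =
        -(1 / (ℏ ^ 2 * l)) * (1 - Real.sinh (ℏ * l) / Real.sinh (l / (2 * η'))) :=
  stmt_6_general ℏ η η' hℏ hη hrel D A B Xb Yb hD hA hB hXb hYb
end

section
/- For every real λ ≠ 0 one has the identity X_a(λ)·X_b(−λ)·A(λ) + Y_a(λ)·Y_b(−λ)·B(λ) = (2/(ħ²λ))·cosh(ħλ/2). (This is the coefficient identity underlying the commutator [a(λ), b(μ)] = [b(λ), a(μ)] = (2/(ħ²λ))cosh(ħλ/2)·δ(λ+μ).) -/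
/-!
Writing `p = 1 + csch(λ/2η)·sinh ħλ`, `q = 1 − csch(λ/2η′)·sinh ħλ` and `c = cosh(ħλ/2)`, both
`D = p + q + 4c` and, after using the parity of `sinh` and `cosh`, the left-hand side is
`((p + 2c)(q + 2c) − (pq − 4c²)) / (ħ²λ D) = 2c(p + q + 4c) / (ħ²λ D)`. So the identity holds as
soon as `D ≠ 0`; and `D > 0` because `1/η′ = 1/η + ħ` makes `csch(λ/2η) − csch(λ/2η′)` have the
sign of `λ`, as does `sinh ħλ`.
-/

open Real

lemma inv_sinh_sub_inv_sinh_add_mul_nonneg {a t w : ℝ} (hat : 0 ≤ a * t) (haw : 0 < a * w) :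
    0 ≤ ((sinh a)⁻¹ - (sinh (a + t))⁻¹) * w := by
  rcases pos_and_pos_or_neg_and_neg_of_mul_pos haw with ⟨ha, hw⟩ | ⟨ha, hw⟩
  · have ht : 0 ≤ t := nonneg_of_mul_nonneg_right hat ha
    have hsa : 0 < sinh a := sinh_pos_iff.mpr ha
    have hle : sinh a ≤ sinh (a + t) := sinh_le_sinh.mpr (by linarith)
    exact mul_nonneg (sub_nonneg.mpr (inv_anti₀ hsa hle)) hw.le
  · have ht : t ≤ 0 := nonpos_of_mul_nonneg_right hat ha
    have hsa : sinh a < 0 := sinh_neg_iff.mpr ha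
    have hsat : sinh (a + t) < 0 := sinh_neg_iff.mpr (by linarith)
    have hle : sinh (a + t) ≤ sinh a := sinh_le_sinh.mpr (by linarith)
    exact mul_nonneg_of_nonpos_of_nonpos
      (sub_nonpos.mpr ((inv_le_inv_of_neg hsa hsat).mpr hle)) hw.le

lemma cosh_add_inv_sinh_sub_inv_sinh_pos {ℏ η η' l : ℝ} (hℏ : 0 < ℏ) (hη : 0 < η)
    (hrel : 1 / η' = 1 / η + ℏ) (hl : l ≠ 0) :
    0 < 4 * cosh (ℏ * l / 2) +
      ((sinh (l / (2 * η)))⁻¹ - (sinh (l / (2 * η')))⁻¹) * sinh (ℏ * l) + 2 := by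
  have hshift : l / (2 * η') = l / (2 * η) + ℏ * l / 2 := by
    rw [div_mul_eq_div_div_swap, div_eq_mul_one_div l η', hrel]
    ring
  have hcross : 0 ≤ ((sinh (l / (2 * η)))⁻¹ - (sinh (l / (2 * η')))⁻¹) * sinh (ℏ * l) := by
    rw [hshift]
    refine inv_sinh_sub_inv_sinh_add_mul_nonneg ?_ ?_
    · have : l / (2 * η) * (ℏ * l / 2) = ℏ / (4 * η) * l ^ 2 := by ring
      rw [this]
      positivity
    · rcases hl.lt_or_gt with hneg | hpos
      · exact mul_pos_of_neg_of_neg (div_neg_of_neg_of_pos hneg (by positivity))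
          (sinh_neg_iff.mpr (mul_neg_of_pos_of_neg hℏ hneg))
      · exact mul_pos (div_pos hpos (by positivity)) (sinh_pos_iff.mpr (mul_pos hℏ hpos))
  linarith [one_le_cosh (ℏ * l / 2)]

lemma coefficient_identity {ℏ l c S u v D : ℝ} (hℏ : ℏ ≠ 0) (hl : l ≠ 0)
    (hD : D = 4 * c + (u - v) * S + 2) (hD0 : D ≠ 0) :
    1 / (ℏ * l) * (u * S + 2 * c + 1) * (1 / -(ℏ * l) * (v * S - 2 * c - 1)) * (l / D) +
      1 / (ℏ * l) * (1 / -(ℏ * l)) * (l * ((1 + u * S) * (1 - v * S) - 4 * c ^ 2) / D) =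
      2 / (ℏ ^ 2 * l) * c := by
  field_simp
  rw [hD]
  ring

theorem stmt_7_general (ℏ η η' : ℝ) (hℏ : 0 < ℏ) (hη : 0 < η)
    (hrel : 1 / η' = 1 / η + ℏ)
    (D A B Xa Xb Ya Yb : ℝ → ℝ)
    (hD : ∀ l : ℝ, D l =
      4 * Real.cosh (ℏ * l / 2) +
        ((Real.sinh (l / (2 * η)))⁻¹ - (Real.sinh (l / (2 * η')))⁻¹) * Real.sinh (ℏ * l) + 2)
    (hA : ∀ l : ℝ, A l = l / D l)
    (hB : ∀ l : ℝ, B l =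
      l * ((1 + (Real.sinh (l / (2 * η)))⁻¹ * Real.sinh (ℏ * l)) *
            (1 - (Real.sinh (l / (2 * η')))⁻¹ * Real.sinh (ℏ * l)) -
            4 * (Real.cosh (ℏ * l / 2)) ^ 2) / D l)
    (hXa : ∀ l : ℝ, Xa l =
      (1 / (ℏ * l)) * ((Real.sinh (l / (2 * η)))⁻¹ * Real.sinh (ℏ * l) + 2 * Real.cosh (ℏ * l / 2) + 1))
    (hXb : ∀ l : ℝ, Xb l =
      (1 / (ℏ * l)) * ((Real.sinh (l / (2 * η')))⁻¹ * Real.sinh (ℏ * l) - 2 * Real.cosh (ℏ * l / 2) - 1))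
    (hYa : ∀ l : ℝ, Ya l = 1 / (ℏ * l))
    (hYb : ∀ l : ℝ, Yb l = 1 / (ℏ * l)) :
    ∀ l : ℝ, l ≠ 0 →
      Xa l * Xb (-l) * A l + Ya l * Yb (-l) * B l =
        (2 / (ℏ ^ 2 * l)) * Real.cosh (ℏ * l / 2) := by
  intro l hl
  rw [hXa, hXb, hYa, hYb, hA, hB]
  simp only [mul_neg, neg_div, sinh_neg, cosh_neg, inv_neg, neg_mul, neg_neg]
  exact coefficient_identity hℏ.ne' hl (hD l)
    (hD l ▸ cosh_add_inv_sinh_sub_inv_sinh_pos hℏ hη hrel hl).ne'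

/-- for every real λ ≠ 0,
`X_a(λ)·X_b(−λ)·A(λ) + Y_a(λ)·Y_b(−λ)·B(λ) = (2/(ħ²λ))·cosh(ħλ/2)`. -/
theorem stmt_7 (ℏ η η' : ℝ) (hℏ : 0 < ℏ) (hη : 0 < η) (hη' : 0 < η')
    (hrel : 1 / η' = 1 / η + ℏ)
    (D A B Xa Xb Ya Yb : ℝ → ℝ)
    (hD : ∀ l : ℝ, D l =
      4 * Real.cosh (ℏ * l / 2) +
        ((Real.sinh (l / (2 * η)))⁻¹ - (Real.sinh (l / (2 * η')))⁻¹) * Real.sinh (ℏ * l) + 2)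
    (hA : ∀ l : ℝ, A l = l / D l)
    (hB : ∀ l : ℝ, B l =
      l * ((1 + (Real.sinh (l / (2 * η)))⁻¹ * Real.sinh (ℏ * l)) *
            (1 - (Real.sinh (l / (2 * η')))⁻¹ * Real.sinh (ℏ * l)) -
            4 * (Real.cosh (ℏ * l / 2)) ^ 2) / D l)
    (hXa : ∀ l : ℝ, Xa l =
      (1 / (ℏ * l)) * ((Real.sinh (l / (2 * η)))⁻¹ * Real.sinh (ℏ * l) + 2 * Real.cosh (ℏ * l / 2) + 1))
    (hXb : ∀ l : ℝ, Xb l =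
      (1 / (ℏ * l)) * ((Real.sinh (l / (2 * η')))⁻¹ * Real.sinh (ℏ * l) - 2 * Real.cosh (ℏ * l / 2) - 1))
    (hYa : ∀ l : ℝ, Ya l = 1 / (ℏ * l))
    (hYb : ∀ l : ℝ, Yb l = 1 / (ℏ * l)) :
    ∀ l : ℝ, l ≠ 0 →
      Xa l * Xb (-l) * A l + Ya l * Yb (-l) * B l =
        (2 / (ℏ ^ 2 * l)) * Real.cosh (ℏ * l / 2) :=
  stmt_7_general ℏ η η' hℏ hη hrel D A B Xa Xb Ya Yb hD hA hB hXa hXb hYa hYb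
end

section
/- For every real λ ≠ 0 one has the identity X̃_a(λ)·X̃_a(−λ)·Ã(λ) + Ỹ_a(λ)·Ỹ_a(−λ)·B̃(λ) = −(1/λ)·(1 + sinh(ħλ)/sinh(λ/(2η))). (This is the coefficient identity underlying the commutator [a(λ), a(μ)] = −(1/λ)(1 + sinh(ħλ)/sinh(λ/(2η)))·δ(λ+μ) in the free boson realization of U_q(osp(2|2)^{(2)}) at γ = q^{1/2}.) -/
/-- for every real λ ≠ 0,
`X̃_a(λ)·X̃_a(−λ)·Ã(λ) + Ỹ_a(λ)·Ỹ_a(−λ)·B̃(λ) = −(1/λ)·(1 + sinh(ħλ)/sinh(λ/(2η)))`. -/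
theorem stmt_8 (ℏ η : ℝ) (hη : 0 < η)
    (A B Xa Xb Ya Yb : ℝ → ℝ)
    (hA : ∀ l : ℝ, A l = l / (4 * Real.cosh (ℏ * l / 2) + 2))
    (hB : ∀ l : ℝ, B l =
      -l * (((Real.sinh (l / (2 * η)))⁻¹) ^ 2 * (Real.sinh (ℏ * l)) ^ 2 +
            2 * Real.cosh (ℏ * l) + 1) / (4 * Real.cosh (ℏ * l / 2) + 2))
    (hXa : ∀ l : ℝ, Xa l =
      (1 / l) * ((Real.sinh (l / (2 * η)))⁻¹ * Real.sinh (ℏ * l) + 2 * Real.cosh (ℏ * l / 2) + 1))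
    (hXb : ∀ l : ℝ, Xb l =
      (1 / l) * ((Real.sinh (l / (2 * η)))⁻¹ * Real.sinh (ℏ * l) - 2 * Real.cosh (ℏ * l / 2) - 1))
    (hYa : ∀ l : ℝ, Ya l = 1 / l)
    (hYb : ∀ l : ℝ, Yb l = 1 / l) :
    ∀ l : ℝ, l ≠ 0 →
      Xa l * Xa (-l) * A l + Ya l * Ya (-l) * B l =
        -(1 / l) * (1 + Real.sinh (ℏ * l) / Real.sinh (l / (2 * η))) := by
  intro l hl
  have hs : Real.sinh (l / (2 * η)) ≠ 0 := by
    simp only [Real.sinh_ne_zero]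
    exact div_ne_zero hl (by positivity)
  have hd : 4 * Real.cosh (ℏ * l / 2) + 2 ≠ 0 := by
    have := Real.one_le_cosh (ℏ * l / 2)
    nlinarith
  have hC : Real.cosh (ℏ * l) = 2 * Real.cosh (ℏ * l / 2) ^ 2 - 1 := by
    have := Real.cosh_two_mul (ℏ * l / 2)
    have h2 := Real.cosh_sq (ℏ * l / 2)
    rw [show (2 : ℝ) * (ℏ * l / 2) = ℏ * l by ring] at this
    linarith
  rw [hA, hB, hXa, hXa, hYa, hYa]
  rw [show ℏ * -l = -(ℏ * l) by ring, show -l / (2 * η) = -(l / (2 * η)) by ring,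
    Real.sinh_neg, Real.sinh_neg, show -(ℏ * l) / 2 = -(ℏ * l / 2) by ring,
    Real.cosh_neg, hC]
  field_simp
  ring
end
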